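/- Every deduction in BPR showing Γ;Δ ⊢* φ (where * is + or −) can be reduced to a deduction showing Γ';Δ' ⊢* φ, for some Γ' ⊆ Γ and Δ' ⊆ Δ, in which no formula occurrence is simultaneously the conclusion of an application of one of the rules ⊥(+), ⊤(−), PR(+), PR(−) and the premise of an application of one of the rules ⊥(+), ⊤(−), PR(+), PR(−). -/
import Mathlib


/-- Atomic propositions; the set `At` includes the units `⊥` and `⊤`. -/
inductive Atom : Type where
  | bot : Atom
  | top : Atom
  | prop : ℕ → Atom
deriving DecidableEq

/-- Formulas over `At`, built with `∧`, `∨`, `→` and co-implication `↤`. -/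
inductive Formula : Type where
  | atom : Atom → Formula
  | conj : Formula → Formula → Formula
  | disj : Formula → Formula → Formula
  | impl : Formula → Formula → Formula
  | coimpl : Formula → Formula → Formula
deriving DecidableEq

abbrev Formula.bot : Formula := .atom .bot
abbrev Formula.top : Formula := .atom .top

/-- A formula is atomic iff it is a member of `At` (including `⊥` and `⊤`). -/
def Formula.isAtomic : Formula → Prop
  | .atom _ => True
  | _ => False

/-- Polarity of a statement: proof (`pos`) or refutation (`neg`). -/
inductive Side : Type where
  | pos : Side
  | neg : Side
deriving DecidableEq
/-- Natural deduction derivations of the bilateral system `BPR`.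
`Deriv Γ Δ s φ` is a deduction of `φ` as a proof (`s = pos`) or refutation
(`s = neg`) from proof assumptions among `Γ` and refutation assumptions
(counterassumptions) among `Δ`. -/
inductive Deriv : Set Formula → Set Formula → Side → Formula → Type where
  | hypP {Γ Δ : Set Formula} {φ : Formula} (h : φ ∈ Γ) : Deriv Γ Δ .pos φ
  | hypN {Γ Δ : Set Formula} {φ : Formula} (h : φ ∈ Δ) : Deriv Γ Δ .neg φ
  -- ⊤(+) and ⊥(−) axioms
  | topP {Γ Δ} : Deriv Γ Δ .pos Formula.top
  | botN {Γ Δ} : Deriv Γ Δ .neg Formula.bot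
  -- implication
  | impI {Γ Δ φ ψ} : Deriv (insert φ Γ) Δ .pos ψ → Deriv Γ Δ .pos (.impl φ ψ)
  | impE {Γ Δ φ ψ} : Deriv Γ Δ .pos (.impl φ ψ) → Deriv Γ Δ .pos φ → Deriv Γ Δ .pos ψ
  | impIN {Γ Δ φ ψ} : Deriv Γ Δ .pos φ → Deriv Γ Δ .neg ψ → Deriv Γ Δ .neg (.impl φ ψ)
  | impE1N {Γ Δ φ ψ} : Deriv Γ Δ .neg (.impl φ ψ) → Deriv Γ Δ .pos φ
  | impE2N {Γ Δ φ ψ} : Deriv Γ Δ .neg (.impl φ ψ) → Deriv Γ Δ .neg ψ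
  -- conjunction
  | andI {Γ Δ φ ψ} : Deriv Γ Δ .pos φ → Deriv Γ Δ .pos ψ → Deriv Γ Δ .pos (.conj φ ψ)
  | andE1 {Γ Δ φ ψ} : Deriv Γ Δ .pos (.conj φ ψ) → Deriv Γ Δ .pos φ
  | andE2 {Γ Δ φ ψ} : Deriv Γ Δ .pos (.conj φ ψ) → Deriv Γ Δ .pos ψ
  | andI1N {Γ Δ φ ψ} : Deriv Γ Δ .neg φ → Deriv Γ Δ .neg (.conj φ ψ)
  | andI2N {Γ Δ φ ψ} : Deriv Γ Δ .neg ψ → Deriv Γ Δ .neg (.conj φ ψ)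
  | andEN {Γ Δ φ ψ s χ} : Deriv Γ Δ .neg (.conj φ ψ) →
      Deriv Γ (insert φ Δ) s χ → Deriv Γ (insert ψ Δ) s χ → Deriv Γ Δ s χ
  -- disjunction
  | orI1 {Γ Δ φ ψ} : Deriv Γ Δ .pos φ → Deriv Γ Δ .pos (.disj φ ψ)
  | orI2 {Γ Δ φ ψ} : Deriv Γ Δ .pos ψ → Deriv Γ Δ .pos (.disj φ ψ)
  | orE {Γ Δ φ ψ s χ} : Deriv Γ Δ .pos (.disj φ ψ) →
      Deriv (insert φ Γ) Δ s χ → Deriv (insert ψ Γ) Δ s χ → Deriv Γ Δ s χ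
  | orIN {Γ Δ φ ψ} : Deriv Γ Δ .neg φ → Deriv Γ Δ .neg ψ → Deriv Γ Δ .neg (.disj φ ψ)
  | orE1N {Γ Δ φ ψ} : Deriv Γ Δ .neg (.disj φ ψ) → Deriv Γ Δ .neg φ
  | orE2N {Γ Δ φ ψ} : Deriv Γ Δ .neg (.disj φ ψ) → Deriv Γ Δ .neg ψ
  -- co-implication
  | coimpI {Γ Δ φ ψ} : Deriv Γ Δ .pos φ → Deriv Γ Δ .neg ψ → Deriv Γ Δ .pos (.coimpl φ ψ)
  | coimpE1 {Γ Δ φ ψ} : Deriv Γ Δ .pos (.coimpl φ ψ) → Deriv Γ Δ .pos φ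
  | coimpE2 {Γ Δ φ ψ} : Deriv Γ Δ .pos (.coimpl φ ψ) → Deriv Γ Δ .neg ψ
  | coimpIN {Γ Δ φ ψ} : Deriv Γ (insert ψ Δ) .neg φ → Deriv Γ Δ .neg (.coimpl φ ψ)
  | coimpEN {Γ Δ φ ψ} : Deriv Γ Δ .neg (.coimpl φ ψ) → Deriv Γ Δ .neg ψ → Deriv Γ Δ .neg φ
  -- ⊥(+) and ⊤(−): from a proof of ⊥ / refutation of ⊤, conclude any formula on either side
  | botP {Γ Δ s φ} : Deriv Γ Δ .pos Formula.bot → Deriv Γ Δ s φ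
  | topN {Γ Δ s φ} : Deriv Γ Δ .neg Formula.top → Deriv Γ Δ s φ
  -- coordination rules PR(+) and PR(−)
  | prP {Γ Δ φ ψ} : Deriv Γ Δ .pos φ → Deriv Γ Δ .neg φ → Deriv Γ Δ .pos ψ
  | prN {Γ Δ φ ψ} : Deriv Γ Δ .pos φ → Deriv Γ Δ .neg φ → Deriv Γ Δ .neg ψ

/-- The deduction ends with an application of one of the rules
`⊥(+)`, `⊤(−)`, `PR(+)`, `PR(−)`. -/
def Deriv.endsSpecial : ∀ {Γ Δ : Set Formula} {s : Side} {φ : Formula}, Deriv Γ Δ s φ → Prop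
  | _, _, _, _, .botP _ => True
  | _, _, _, _, .topN _ => True
  | _, _, _, _, .prP _ _ => True
  | _, _, _, _, .prN _ _ => True
  | _, _, _, _, _ => False

/-- Every application of `PR(+)`, `PR(−)`, `⊥(+)`, `⊤(−)` in the deduction has
atomic premises and an atomic conclusion. -/
def Deriv.specialAtomic : ∀ {Γ Δ : Set Formula} {s : Side} {φ : Formula}, Deriv Γ Δ s φ → Prop
  | _, _, _, _, .hypP _ => True
  | _, _, _, _, .hypN _ => True
  | _, _, _, _, .topP => True
  | _, _, _, _, .botN => True
  | _, _, _, _, .impI d => d.specialAtomic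
  | _, _, _, _, .impE d e => d.specialAtomic ∧ e.specialAtomic
  | _, _, _, _, .impIN d e => d.specialAtomic ∧ e.specialAtomic
  | _, _, _, _, .impE1N d => d.specialAtomic
  | _, _, _, _, .impE2N d => d.specialAtomic
  | _, _, _, _, .andI d e => d.specialAtomic ∧ e.specialAtomic
  | _, _, _, _, .andE1 d => d.specialAtomic
  | _, _, _, _, .andE2 d => d.specialAtomic
  | _, _, _, _, .andI1N d => d.specialAtomic
  | _, _, _, _, .andI2N d => d.specialAtomic
  | _, _, _, _, .andEN d e f => d.specialAtomic ∧ e.specialAtomic ∧ f.specialAtomic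
  | _, _, _, _, .orI1 d => d.specialAtomic
  | _, _, _, _, .orI2 d => d.specialAtomic
  | _, _, _, _, .orE d e f => d.specialAtomic ∧ e.specialAtomic ∧ f.specialAtomic
  | _, _, _, _, .orIN d e => d.specialAtomic ∧ e.specialAtomic
  | _, _, _, _, .orE1N d => d.specialAtomic
  | _, _, _, _, .orE2N d => d.specialAtomic
  | _, _, _, _, .coimpI d e => d.specialAtomic ∧ e.specialAtomic
  | _, _, _, _, .coimpE1 d => d.specialAtomic
  | _, _, _, _, .coimpE2 d => d.specialAtomic
  | _, _, _, _, .coimpIN d => d.specialAtomic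
  | _, _, _, _, .coimpEN d e => d.specialAtomic ∧ e.specialAtomic
  | _, _, _, φ, .botP d => φ.isAtomic ∧ d.specialAtomic
  | _, _, _, φ, .topN d => φ.isAtomic ∧ d.specialAtomic
  | _, _, _, ψ, .prP (φ := χ) d e => χ.isAtomic ∧ ψ.isAtomic ∧ d.specialAtomic ∧ e.specialAtomic
  | _, _, _, ψ, .prN (φ := χ) d e => χ.isAtomic ∧ ψ.isAtomic ∧ d.specialAtomic ∧ e.specialAtomic

/-- No formula occurrence in the deduction is simultaneously the conclusion of an
application of one of `⊥(+)`, `⊤(−)`, `PR(+)`, `PR(−)` and the premise of an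
application of one of these rules. -/
def Deriv.noSpecialChain : ∀ {Γ Δ : Set Formula} {s : Side} {φ : Formula}, Deriv Γ Δ s φ → Prop
  | _, _, _, _, .hypP _ => True
  | _, _, _, _, .hypN _ => True
  | _, _, _, _, .topP => True
  | _, _, _, _, .botN => True
  | _, _, _, _, .impI d => d.noSpecialChain
  | _, _, _, _, .impE d e => d.noSpecialChain ∧ e.noSpecialChain
  | _, _, _, _, .impIN d e => d.noSpecialChain ∧ e.noSpecialChain
  | _, _, _, _, .impE1N d => d.noSpecialChain
  | _, _, _, _, .impE2N d => d.noSpecialChain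
  | _, _, _, _, .andI d e => d.noSpecialChain ∧ e.noSpecialChain
  | _, _, _, _, .andE1 d => d.noSpecialChain
  | _, _, _, _, .andE2 d => d.noSpecialChain
  | _, _, _, _, .andI1N d => d.noSpecialChain
  | _, _, _, _, .andI2N d => d.noSpecialChain
  | _, _, _, _, .andEN d e f => d.noSpecialChain ∧ e.noSpecialChain ∧ f.noSpecialChain
  | _, _, _, _, .orI1 d => d.noSpecialChain
  | _, _, _, _, .orI2 d => d.noSpecialChain
  | _, _, _, _, .orE d e f => d.noSpecialChain ∧ e.noSpecialChain ∧ f.noSpecialChain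
  | _, _, _, _, .orIN d e => d.noSpecialChain ∧ e.noSpecialChain
  | _, _, _, _, .orE1N d => d.noSpecialChain
  | _, _, _, _, .orE2N d => d.noSpecialChain
  | _, _, _, _, .coimpI d e => d.noSpecialChain ∧ e.noSpecialChain
  | _, _, _, _, .coimpE1 d => d.noSpecialChain
  | _, _, _, _, .coimpE2 d => d.noSpecialChain
  | _, _, _, _, .coimpIN d => d.noSpecialChain
  | _, _, _, _, .coimpEN d e => d.noSpecialChain ∧ e.noSpecialChain
  | _, _, _, _, .botP d => ¬ d.endsSpecial ∧ d.noSpecialChain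
  | _, _, _, _, .topN d => ¬ d.endsSpecial ∧ d.noSpecialChain
  | _, _, _, _, .prP d e => ¬ d.endsSpecial ∧ ¬ e.endsSpecial ∧ d.noSpecialChain ∧ e.noSpecialChain
  | _, _, _, _, .prN d e => ¬ d.endsSpecial ∧ ¬ e.endsSpecial ∧ d.noSpecialChain ∧ e.noSpecialChain

lemma Deriv.endsSpecial_dec {Γ Δ : Set Formula} {s : Side} {φ : Formula}
    (d : Deriv Γ Δ s φ) : d.endsSpecial ∨ ¬ d.endsSpecial := by
  cases d <;> simp [Deriv.endsSpecial]

/-- From a derivation that ends with a special rule and has no special chains,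
we can derive anything with no special chains. -/
lemma Deriv.useSpecial {Γ Δ : Set Formula} {s : Side} {φ : Formula}
    (d : Deriv Γ Δ s φ) (hs : d.endsSpecial) (hc : d.noSpecialChain)
    (s' : Side) (ψ : Formula) :
    ∃ D : Deriv Γ Δ s' ψ, D.noSpecialChain := by
  cases d
  case botP d0 => exact ⟨.botP d0, hc.1, hc.2⟩
  case topN d0 => exact ⟨.topN d0, hc.1, hc.2⟩
  case prP d0 e0 =>
    cases s' with
    | pos => exact ⟨.prP d0 e0, hc.1, hc.2.1, hc.2.2.1, hc.2.2.2⟩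
    | neg => exact ⟨.prN d0 e0, hc.1, hc.2.1, hc.2.2.1, hc.2.2.2⟩
  case prN d0 e0 =>
    cases s' with
    | pos => exact ⟨.prP d0 e0, hc.1, hc.2.1, hc.2.2.1, hc.2.2.2⟩
    | neg => exact ⟨.prN d0 e0, hc.1, hc.2.1, hc.2.2.1, hc.2.2.2⟩
  all_goals exact absurd hs (by simp [Deriv.endsSpecial])

lemma Deriv.fromBot {Γ Δ : Set Formula} (d : Deriv Γ Δ .pos Formula.bot)
    (hc : d.noSpecialChain) (s' : Side) (ψ : Formula) :
    ∃ D : Deriv Γ Δ s' ψ, D.noSpecialChain := by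
  rcases d.endsSpecial_dec with h | h
  · exact d.useSpecial h hc s' ψ
  · exact ⟨.botP d, h, hc⟩

lemma Deriv.fromTop {Γ Δ : Set Formula} (d : Deriv Γ Δ .neg Formula.top)
    (hc : d.noSpecialChain) (s' : Side) (ψ : Formula) :
    ∃ D : Deriv Γ Δ s' ψ, D.noSpecialChain := by
  rcases d.endsSpecial_dec with h | h
  · exact d.useSpecial h hc s' ψ
  · exact ⟨.topN d, h, hc⟩

lemma Deriv.fromPair {Γ Δ : Set Formula} {χ : Formula}
    (d : Deriv Γ Δ .pos χ) (e : Deriv Γ Δ .neg χ)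
    (hd : d.noSpecialChain) (he : e.noSpecialChain) (s' : Side) (ψ : Formula) :
    ∃ D : Deriv Γ Δ s' ψ, D.noSpecialChain := by
  rcases d.endsSpecial_dec with h | h
  · exact d.useSpecial h hd s' ψ
  rcases e.endsSpecial_dec with h' | h'
  · exact e.useSpecial h' he s' ψ
  cases s' with
  | pos => exact ⟨.prP d e, h, h', hd, he⟩
  | neg => exact ⟨.prN d e, h, h', hd, he⟩

lemma Deriv.reduce {Γ Δ : Set Formula} {s : Side} {φ : Formula}
    (D : Deriv Γ Δ s φ) : ∃ D' : Deriv Γ Δ s φ, D'.noSpecialChain := by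
  induction D with
  | hypP h => exact ⟨.hypP h, trivial⟩
  | hypN h => exact ⟨.hypN h, trivial⟩
  | topP => exact ⟨.topP, trivial⟩
  | botN => exact ⟨.botN, trivial⟩
  | impI _ ih => obtain ⟨D, h⟩ := ih; exact ⟨.impI D, h⟩
  | impE _ _ ih1 ih2 =>
    obtain ⟨D1, h1⟩ := ih1; obtain ⟨D2, h2⟩ := ih2; exact ⟨.impE D1 D2, h1, h2⟩
  | impIN _ _ ih1 ih2 =>
    obtain ⟨D1, h1⟩ := ih1; obtain ⟨D2, h2⟩ := ih2; exact ⟨.impIN D1 D2, h1, h2⟩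
  | impE1N _ ih => obtain ⟨D, h⟩ := ih; exact ⟨.impE1N D, h⟩
  | impE2N _ ih => obtain ⟨D, h⟩ := ih; exact ⟨.impE2N D, h⟩
  | andI _ _ ih1 ih2 =>
    obtain ⟨D1, h1⟩ := ih1; obtain ⟨D2, h2⟩ := ih2; exact ⟨.andI D1 D2, h1, h2⟩
  | andE1 _ ih => obtain ⟨D, h⟩ := ih; exact ⟨.andE1 D, h⟩
  | andE2 _ ih => obtain ⟨D, h⟩ := ih; exact ⟨.andE2 D, h⟩
  | andI1N _ ih => obtain ⟨D, h⟩ := ih; exact ⟨.andI1N D, h⟩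
  | andI2N _ ih => obtain ⟨D, h⟩ := ih; exact ⟨.andI2N D, h⟩
  | andEN _ _ _ ih1 ih2 ih3 =>
    obtain ⟨D1, h1⟩ := ih1; obtain ⟨D2, h2⟩ := ih2; obtain ⟨D3, h3⟩ := ih3
    exact ⟨.andEN D1 D2 D3, h1, h2, h3⟩
  | orI1 _ ih => obtain ⟨D, h⟩ := ih; exact ⟨.orI1 D, h⟩
  | orI2 _ ih => obtain ⟨D, h⟩ := ih; exact ⟨.orI2 D, h⟩
  | orE _ _ _ ih1 ih2 ih3 =>
    obtain ⟨D1, h1⟩ := ih1; obtain ⟨D2, h2⟩ := ih2; obtain ⟨D3, h3⟩ := ih3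
    exact ⟨.orE D1 D2 D3, h1, h2, h3⟩
  | orIN _ _ ih1 ih2 =>
    obtain ⟨D1, h1⟩ := ih1; obtain ⟨D2, h2⟩ := ih2; exact ⟨.orIN D1 D2, h1, h2⟩
  | orE1N _ ih => obtain ⟨D, h⟩ := ih; exact ⟨.orE1N D, h⟩
  | orE2N _ ih => obtain ⟨D, h⟩ := ih; exact ⟨.orE2N D, h⟩
  | coimpI _ _ ih1 ih2 =>
    obtain ⟨D1, h1⟩ := ih1; obtain ⟨D2, h2⟩ := ih2; exact ⟨.coimpI D1 D2, h1, h2⟩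
  | coimpE1 _ ih => obtain ⟨D, h⟩ := ih; exact ⟨.coimpE1 D, h⟩
  | coimpE2 _ ih => obtain ⟨D, h⟩ := ih; exact ⟨.coimpE2 D, h⟩
  | coimpIN _ ih => obtain ⟨D, h⟩ := ih; exact ⟨.coimpIN D, h⟩
  | coimpEN _ _ ih1 ih2 =>
    obtain ⟨D1, h1⟩ := ih1; obtain ⟨D2, h2⟩ := ih2; exact ⟨.coimpEN D1 D2, h1, h2⟩
  | botP _ ih => obtain ⟨D, h⟩ := ih; exact D.fromBot h _ _
  | topN _ ih => obtain ⟨D, h⟩ := ih; exact D.fromTop h _ _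
  | prP _ _ ih1 ih2 =>
    obtain ⟨D1, h1⟩ := ih1; obtain ⟨D2, h2⟩ := ih2; exact D1.fromPair D2 h1 h2 _ _
  | prN _ _ ih1 ih2 =>
    obtain ⟨D1, h1⟩ := ih1; obtain ⟨D2, h2⟩ := ih2; exact D1.fromPair D2 h1 h2 _ _

/-- Every deduction in `BPR` showing `Γ;Δ ⊢* φ` can be reduced to a
deduction showing `Γ';Δ' ⊢* φ`, for some `Γ' ⊆ Γ` and `Δ' ⊆ Δ`, in which no formula
occurrence is simultaneously the conclusion of an application of one of the rules
`⊥(+)`, `⊤(−)`, `PR(+)`, `PR(−)` and the premise of an application of one of these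
rules. -/
theorem no_consecutive_special_reduction (Γ Δ : Set Formula) (s : Side) (φ : Formula)
    (D : Deriv Γ Δ s φ) :
    ∃ (Γ' Δ' : Set Formula), Γ' ⊆ Γ ∧ Δ' ⊆ Δ ∧
      ∃ D' : Deriv Γ' Δ' s φ, D'.noSpecialChain :=
  ⟨Γ, Δ, le_refl _, le_refl _, D.reduce⟩
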